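/- arXiv:1904.03558 — 7 statements merged into one kernel-verified Lean document; each statement's English description precedes it below -/
import Mathlib

section
/- Let G be an acyclic transitive digraph on a finite vertex set V. Then G is 2-dimensional if and only if the complement of G is transitively orientable. -/
/-- Undirected closure of a digraph: `E ∪ E⁻¹`. -/
def ucl {V : Type*} (E : V → V → Prop) : V → V → Prop := fun a b => E a b ∨ E b a

/-- Complement of a digraph: all pairs of distinct vertices not in `ucl E`. -/
def cmpl {V : Type*} (E : V → V → Prop) : V → V → Prop := fun a b => a ≠ b ∧ ¬ ucl E a b

/-- A digraph is oriented iff `E ∩ E⁻¹ = ∅`. -/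
def Oriented {V : Type*} (E : V → V → Prop) : Prop := ∀ a b, E a b → ¬ E b a

/-- `O` is an orientation of `E`: a maximal oriented subset of `E`. -/
def IsOrientation {V : Type*} (O E : V → V → Prop) : Prop :=
  (∀ a b, O a b → E a b) ∧ Oriented O ∧
    ∀ O' : V → V → Prop, (∀ a b, O' a b → E a b) → Oriented O' →
      (∀ a b, O a b → O' a b) → ∀ a b, O' a b → O a b

/-- Transitivity of a digraph: `(a,b) ∈ E`, `(b,c) ∈ E` and `a ≠ c` imply `(a,c) ∈ E`. -/
def TransD {V : Type*} (E : V → V → Prop) : Prop :=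
  ∀ a b c, E a b → E b c → a ≠ c → E a c

/-- Transitive closure of a digraph. -/
def tcl {V : Type*} (E : V → V → Prop) : V → V → Prop := Relation.TransGen E

/-- A digraph is acyclic iff its transitive closure is irreflexive. -/
def Acyclic {V : Type*} (E : V → V → Prop) : Prop := Irreflexive (tcl E)

/-- A transitive orientation of `E` is an orientation of `E` that is transitive. -/
def IsTransOrientation {V : Type*} (O E : V → V → Prop) : Prop :=
  IsOrientation O E ∧ TransD O

/-- `E` is transitively orientable iff it has a transitive orientation. -/
def TransOrientable {V : Type*} (E : V → V → Prop) : Prop := ∃ O, IsTransOrientation O E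

/-- `L` is a strict linear order on the vertex set. -/
def IsStrictLinear {V : Type*} (L : V → V → Prop) : Prop :=
  Irreflexive L ∧ Transitive L ∧ ∀ a b : V, a ≠ b → L a b ∨ L b a

/-- `E` is 2-dimensional: the intersection of two strict linear orders. -/
def TwoDim {V : Type*} (E : V → V → Prop) : Prop :=
  ∃ L₁ L₂ : V → V → Prop, IsStrictLinear L₁ ∧ IsStrictLinear L₂ ∧
    ∀ a b, E a b ↔ L₁ a b ∧ L₂ a b

/-- Direct forcing `Γ` between edges of an undirected graph `E`:
`(a,b) Γ (c,d)` iff both are edges of `E` and either `a = c` with `b, d` non-adjacent,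
or `b = d` with `a, c` non-adjacent. -/
def Forces {V : Type*} (E : V → V → Prop) (e f : V × V) : Prop :=
  E e.1 e.2 ∧ E f.1 f.2 ∧
    ((e.1 = f.1 ∧ e.2 ≠ f.2 ∧ ¬ E e.2 f.2) ∨ (e.2 = f.2 ∧ e.1 ≠ f.1 ∧ ¬ E e.1 f.1))

/-- `S` is a 2-dimensional subgraph of `G`: a subgraph that is a 2-dimensional
acyclic transitive digraph. -/
def TwoDimSubgraph {V : Type*} (G S : V → V → Prop) : Prop :=
  (∀ a b, S a b → G a b) ∧ Irreflexive S ∧ TransD S ∧ Acyclic S ∧ TwoDim S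

/-- A permutation graph: an undirected graph such that both it and its complement
are transitively orientable. -/
def PermGraph {V : Type*} (E : V → V → Prop) : Prop :=
  Irreflexive E ∧ (∀ a b, E a b → E b a) ∧ TransOrientable E ∧ TransOrientable (cmpl E)

/-- `S` is a permutation subgraph of `G`: an undirected subgraph of `G` that is a
permutation graph. -/
def PermSubgraph {V : Type*} (G S : V → V → Prop) : Prop :=
  (∀ a b, S a b → G a b) ∧ PermGraph S

/-- Auxiliary: `G ∪ O` is a strict linear order when `O` is a transitive, oriented,
total-on-complement relation disjoint from `G`. -/
lemma aux_strict_linear {V : Type*} (G O : V → V → Prop)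
    (hirr : Irreflexive G) (htrans : TransD G)
    (hGasym : ∀ a b, G a b → ¬ G b a)
    (hOc : ∀ a b, O a b → a ≠ b ∧ ¬ G a b ∧ ¬ G b a)
    (horient : Oriented O) (hOt : TransD O)
    (htot : ∀ a b, a ≠ b → ¬ G a b → ¬ G b a → O a b ∨ O b a) :
    IsStrictLinear (fun a b => G a b ∨ O a b) := by
  refine ⟨?_, ?_, ?_⟩
  · intro a h
    rcases h with h | h
    · exact hirr a h
    · exact (hOc a a h).1 rfl
  · rintro a b c (hab | hab) (hbc | hbc)
    · -- G a b, G b c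
      rcases eq_or_ne a c with rfl | hac
      · exact absurd hbc (hGasym a b hab)
      · exact Or.inl (htrans a b c hab hbc hac)
    · -- G a b, O b c
      rcases (hOc b c hbc) with ⟨hbc', hnGbc, hnGcb⟩
      by_cases hGac : G a c
      · exact Or.inl hGac
      by_cases hGca : G c a
      · exact absurd (htrans c a b hGca hab (Ne.symm hbc')) hnGcb
      have hac : a ≠ c := by
        rintro rfl
        exact (hOc b a hbc).2.2 hab
      rcases htot a c hac hGac hGca with h | h
      · exact Or.inr h
      · -- O b c, O c a
        have hba : b ≠ a := fun e => hirr a (e ▸ hab)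
        exact absurd hab ((hOc b a (hOt b c a hbc h hba)).2.2)
    · -- O a b, G b c
      rcases (hOc a b hab) with ⟨hab', hnGab, hnGba⟩
      by_cases hGac : G a c
      · exact Or.inl hGac
      by_cases hGca : G c a
      · exact absurd (htrans b c a hbc hGca (Ne.symm hab')) hnGba
      have hac : a ≠ c := by
        rintro rfl
        exact hnGba hbc
      rcases htot a c hac hGac hGca with h | h
      · exact Or.inr h
      · -- O c a, O a b
        have hcb : c ≠ b := fun e => hirr b (e ▸ hbc)
        exact absurd hbc ((hOc c b (hOt c a b h hab hcb)).2.2)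
    · -- O a b, O b c
      rcases eq_or_ne a c with rfl | hac
      · exact absurd hab (horient b a hbc)
      · exact Or.inr (hOt a b c hab hbc hac)
  · intro a b hne
    by_cases hGab : G a b
    · exact Or.inl (Or.inl hGab)
    by_cases hGba : G b a
    · exact Or.inr (Or.inl hGba)
    rcases htot a b hne hGab hGba with h | h
    · exact Or.inl (Or.inr h)
    · exact Or.inr (Or.inr h)

theorem two_dim_iff_complement_transitively_orientable
    {V : Type*} [Fintype V] (G : V → V → Prop)
    (hirr : Irreflexive G) (hacyc : Acyclic G) (htrans : TransD G) :
    TwoDim G ↔ TransOrientable (cmpl G) := by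
  have hGasym : ∀ a b, G a b → ¬ G b a := by
    intro a b hab hba
    exact hacyc a (Relation.TransGen.head hab (Relation.TransGen.single hba))
  constructor
  · rintro ⟨L₁, L₂, ⟨h1i, h1t, h1tot⟩, ⟨h2i, h2t, h2tot⟩, hG⟩
    have h1asym : ∀ a b, L₁ a b → ¬ L₁ b a := fun a b h h' => h1i a (h1t h h')
    have h2asym : ∀ a b, L₂ a b → ¬ L₂ b a := fun a b h h' => h2i a (h2t h h')
    refine ⟨fun a b => L₁ a b ∧ L₂ b a, ⟨⟨?_, ?_, ?_⟩, ?_⟩⟩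
    · rintro a b ⟨h1, h2⟩
      refine ⟨fun e => h1i a (e ▸ h1), ?_⟩
      rintro (hg | hg)
      · exact h2asym b a h2 ((hG a b).1 hg).2
      · exact h1asym a b h1 ((hG b a).1 hg).1
    · rintro a b ⟨h1, _⟩ ⟨h1', _⟩
      exact h1asym a b h1 h1'
    · intro O' hsub hor hsup a b hab
      rcases hsub a b hab with ⟨hne, hucl⟩
      have hnGab : ¬ G a b := fun h => hucl (Or.inl h)
      have hnGba : ¬ G b a := fun h => hucl (Or.inr h)
      rcases h1tot a b hne with h1 | h1
      · rcases h2tot a b hne with h2 | h2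
        · exact absurd ((hG a b).2 ⟨h1, h2⟩) hnGab
        · exact ⟨h1, h2⟩
      · rcases h2tot b a (Ne.symm hne) with h2 | h2
        · exact absurd ((hG b a).2 ⟨h1, h2⟩) hnGba
        · exact absurd hab (hor b a (hsup b a ⟨h1, h2⟩))
    · rintro a b c ⟨h1, h2⟩ ⟨h1', h2'⟩ _
      exact ⟨h1t h1 h1', h2t h2' h2⟩
  · rintro ⟨O, ⟨hsub, horient, hmax⟩, hOt⟩
    have hOc : ∀ a b, O a b → a ≠ b ∧ ¬ G a b ∧ ¬ G b a := by
      intro a b h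
      rcases hsub a b h with ⟨hne, hucl⟩
      exact ⟨hne, fun hg => hucl (Or.inl hg), fun hg => hucl (Or.inr hg)⟩
    have htot : ∀ a b, a ≠ b → ¬ G a b → ¬ G b a → O a b ∨ O b a := by
      intro a b hne hnab hnba
      by_contra hcon
      push_neg at hcon
      obtain ⟨hnOab, hnOba⟩ := hcon
      have hcmpl : cmpl G a b := ⟨hne, fun h => h.elim hnab hnba⟩
      set O' : V → V → Prop := fun x y => O x y ∨ (x = a ∧ y = b) with hO'
      have hO'sub : ∀ x y, O' x y → cmpl G x y := by
        rintro x y (h | ⟨rfl, rfl⟩)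
        · exact hsub x y h
        · exact hcmpl
      have hO'or : Oriented O' := by
        rintro x y (h | ⟨rfl, rfl⟩) (h' | ⟨he1, he2⟩)
        · exact horient x y h h'
        · exact hnOba (he1 ▸ he2 ▸ h)
        · exact hnOba h'
        · exact hne he1.symm
      have := hmax O' hO'sub hO'or (fun x y h => Or.inl h) a b (Or.inr ⟨rfl, rfl⟩)
      exact hnOab this
    have hOt' : TransD (fun a b => O b a) := by
      intro a b c hab hbc hac
      exact hOt c b a hbc hab (Ne.symm hac)
    have h1 := aux_strict_linear G O hirr htrans hGasym hOc horient hOt htot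
    have h2 := aux_strict_linear G (fun a b => O b a) hirr htrans hGasym
        (fun a b h => ⟨(hOc b a h).1.symm, (hOc b a h).2.2, (hOc b a h).2.1⟩)
        (fun a b h h' => horient b a h h') hOt'
        (fun a b hne hnab hnba => (htot b a (Ne.symm hne) hnba hnab))
    refine ⟨_, _, h1, h2, ?_⟩
    intro a b
    constructor
    · intro hg
      exact ⟨Or.inl hg, Or.inl hg⟩
    · rintro ⟨h | h, h' | h'⟩
      · exact h
      · exact h
      · exact h'
      · exact absurd h' (horient a b h)
end

section
/- Let G be an acyclic transitive digraph on a finite vertex set V and let O be a transitive orientation of the complement of G. Then tcl(G ∪ O) and tcl(G ∪ O⁻¹) are strict linear orders on V, and G is the intersection of these two linear orders. -/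
/-!
Since `G` is a strict partial order and `O` orients its incomparability graph transitively,
`G ∪ O` is already transitive: in a mixed step `G a b`, `O b c`, the pair `a, c` cannot be
`G`-comparable (either direction would make `b, c` comparable) and cannot be oriented `O c a`
(that would force `O b a`). Being also total and asymmetric, `G ∪ O` is a strict linear order,
equal to its transitive closure, and the same holds for `O⁻¹`, which is again a transitive
orientation of the symmetric relation `cmpl G`. A pair in both orders lies in `G`, because `O`
and `O⁻¹` are disjoint.
-/

section Digraph

variable {V : Type*}

theorem cmpl_symm {G : V → V → Prop} {a b : V} (h : cmpl G a b) : cmpl G b a :=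
  ⟨h.1.symm, fun h' => h.2 (Or.symm h')⟩

theorem Acyclic.oriented {G : V → V → Prop} (hG : Acyclic G) : Oriented G :=
  fun a _ hab hba => hG a (.head hab (.single hba))

theorem TransD.flip {E : V → V → Prop} (hE : TransD E) : TransD fun a b => E b a :=
  fun a b c hab hbc hac => hE c b a hbc hab hac.symm

theorem tcl_eq_self {L : V → V → Prop} (hL : Transitive L) : tcl L = L :=
  have : IsTrans V L := ⟨hL⟩
  Relation.transGen_eq_self

theorem isStrictLinear_of_oriented {L : V → V → Prop} (hor : Oriented L) (htrans : TransD L)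
    (htot : ∀ a b, a ≠ b → L a b ∨ L b a) : IsStrictLinear L := by
  refine ⟨fun a h => hor a a h h, fun a b c hab hbc => ?_, htot⟩
  by_cases hac : a = c
  · subst hac
    exact absurd hbc (hor a b hab)
  · exact htrans a b c hab hbc hac

namespace IsOrientation

variable {O E : V → V → Prop}

theorem total (hO : IsOrientation O E) {a b : V} (hab : E a b) (hne : a ≠ b) :
    O a b ∨ O b a := by
  obtain ⟨hsub, hor, hmax⟩ := hO
  by_contra! hnot
  let O' : V → V → Prop := fun x y => O x y ∨ (x = a ∧ y = b)
  have hsub' : ∀ x y, O' x y → E x y := by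
    rintro x y (h | ⟨rfl, rfl⟩)
    exacts [hsub x y h, hab]
  have hor' : Oriented O' := by
    rintro x y (h | ⟨hxa, hyb⟩) (h' | ⟨hya, hxb⟩)
    · exact hor x y h h'
    · exact hnot.2 (hxb ▸ hya ▸ h)
    · exact hnot.2 (hxa ▸ hyb ▸ h')
    · exact hne (hxa.symm.trans hxb)
  exact hnot.1 (hmax O' hsub' hor' (fun x y => Or.inl) a b (Or.inr ⟨rfl, rfl⟩))

theorem flip (hO : IsOrientation O E) (hE : ∀ a b, E a b → E b a) :
    IsOrientation (fun a b => O b a) E := by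
  obtain ⟨hsub, hor, hmax⟩ := hO
  refine ⟨fun a b h => hE b a (hsub b a h), fun a b h h' => hor b a h h', ?_⟩
  intro O' hsub' hor' hext a b h
  exact hmax (fun x y => O' y x) (fun x y h => hE y x (hsub' y x h))
    (fun x y h h' => hor' y x h h') (fun x y h => hext y x h) b a h

end IsOrientation

theorem IsTransOrientation.flip {O E : V → V → Prop} (hO : IsTransOrientation O E)
    (hE : ∀ a b, E a b → E b a) : IsTransOrientation (fun a b => O b a) E :=
  ⟨hO.1.flip hE, hO.2.flip⟩

section Linearization

variable {G O : V → V → Prop}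

theorem transD_sup_of_isTransOrientation_cmpl (hirr : Irreflexive G) (htrans : TransD G)
    (hO : IsTransOrientation O (cmpl G)) : TransD (fun a b => G a b ∨ O a b) := by
  have htot : ∀ {a c}, cmpl G a c → O a c ∨ O c a := fun h => hO.1.total h h.1
  obtain ⟨⟨hOG, -, -⟩, hOtrans⟩ := hO
  rintro a b c (hab | hab) (hbc | hbc) hac
  · exact .inl (htrans a b c hab hbc hac)
  · by_cases hGac : ucl G a c
    · refine hGac.imp id fun hca => absurd (.inr ?_) (hOG b c hbc).2
      exact htrans c a b hca hab (hOG b c hbc).1.symm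
    · refine .inr ((htot ⟨hac, hGac⟩).resolve_right fun hca => (hOG b a ?_).2 (.inr hab))
      exact hOtrans b c a hbc hca fun hba => hirr a (hba ▸ hab)
  · by_cases hGac : ucl G a c
    · refine hGac.imp id fun hca => absurd (.inr ?_) (hOG a b hab).2
      exact htrans b c a hbc hca (hOG a b hab).1.symm
    · refine .inr ((htot ⟨hac, hGac⟩).resolve_right fun hca => (hOG c b ?_).2 (.inr hbc))
      exact hOtrans c a b hca hab fun hcb => hirr b (hcb ▸ hbc)
  · exact .inr (hOtrans a b c hab hbc hac)

theorem oriented_sup_of_isTransOrientation_cmpl (hacyc : Acyclic G)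
    (hO : IsTransOrientation O (cmpl G)) : Oriented (fun a b => G a b ∨ O a b) := by
  obtain ⟨hOG, hOor, -⟩ := hO.1
  rintro a b (hab | hab) (hba | hba)
  exacts [hacyc.oriented a b hab hba, (hOG b a hba).2 (.inr hab), (hOG a b hab).2 (.inr hba),
    hOor a b hab hba]

theorem isStrictLinear_sup_of_isTransOrientation_cmpl (hirr : Irreflexive G) (hacyc : Acyclic G)
    (htrans : TransD G) (hO : IsTransOrientation O (cmpl G)) :
    IsStrictLinear (fun a b => G a b ∨ O a b) := by
  refine isStrictLinear_of_oriented (oriented_sup_of_isTransOrientation_cmpl hacyc hO)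
    (transD_sup_of_isTransOrientation_cmpl hirr htrans hO) fun a b hne => ?_
  by_cases hG : ucl G a b
  · exact hG.imp .inl .inl
  · exact (hO.1.total ⟨hne, hG⟩ hne).imp .inr .inr

end Linearization

end Digraph

theorem linearizations_intersect_to_G_general
    {V : Type*} (G O : V → V → Prop)
    (hirr : Irreflexive G) (hacyc : Acyclic G) (htrans : TransD G)
    (hO : IsTransOrientation O (cmpl G)) :
    IsStrictLinear (tcl (fun a b => G a b ∨ O a b)) ∧
    IsStrictLinear (tcl (fun a b => G a b ∨ O b a)) ∧
    ∀ a b, G a b ↔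
      tcl (fun a b => G a b ∨ O a b) a b ∧ tcl (fun a b => G a b ∨ O b a) a b := by
  have hL₁ := isStrictLinear_sup_of_isTransOrientation_cmpl hirr hacyc htrans hO
  have hL₂ := isStrictLinear_sup_of_isTransOrientation_cmpl hirr hacyc htrans
    (hO.flip fun _ _ => cmpl_symm)
  rw [tcl_eq_self hL₁.2.1, tcl_eq_self hL₂.2.1]
  refine ⟨hL₁, hL₂, fun a b => ⟨fun h => ⟨.inl h, .inl h⟩, ?_⟩⟩
  rintro ⟨h | hab, h | hba⟩
  exacts [h, h, h, absurd hba (hO.1.2.1 a b hab)]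

theorem linearizations_intersect_to_G
    {V : Type*} [Fintype V] (G O : V → V → Prop)
    (hirr : Irreflexive G) (hacyc : Acyclic G) (htrans : TransD G)
    (hO : IsTransOrientation O (cmpl G)) :
    IsStrictLinear (tcl (fun a b => G a b ∨ O a b)) ∧
    IsStrictLinear (tcl (fun a b => G a b ∨ O b a)) ∧
    ∀ a b, G a b ↔
      tcl (fun a b => G a b ∨ O a b) a b ∧ tcl (fun a b => G a b ∨ O b a) a b :=
  linearizations_intersect_to_G_general G O hirr hacyc htrans hO
end

section
/- Let G be an undirected graph on a finite vertex set V. An orientation O of G is transitive if and only if (i) O contains every edge of G directly forced by an edge of O (i.e., if e ∈ O, f is an edge of G, and e Γ f, then f ∈ O), and (ii) O is acyclic. -/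
theorem transitive_orientation_iff_forced_and_acyclic
    {V : Type*} [Fintype V] (G O : V → V → Prop)
    (hirr : Irreflexive G) (hund : ∀ a b, G a b → G b a)
    (hO : IsOrientation O G) :
    TransD O ↔
      ((∀ e f : V × V, O e.1 e.2 → G f.1 f.2 → Forces G e f → O f.1 f.2) ∧
        Acyclic O) := by
  obtain ⟨hsub, hor, hmax⟩ := hO
  -- totality on edges
  have tot : ∀ a b, G a b → O a b ∨ O b a := by
    intro a b hab
    by_contra hc
    push_neg at hc
    have hne : a ≠ b := fun h => hirr a (h ▸ hab)
    set O' : V → V → Prop := fun x y => O x y ∨ (x = a ∧ y = b) with hO'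
    have h1 : ∀ x y, O' x y → G x y := by
      rintro x y (h | ⟨rfl, rfl⟩)
      · exact hsub x y h
      · exact hab
    have h2 : Oriented O' := by
      rintro x y (h | ⟨rfl, rfl⟩) (h' | ⟨he1, he2⟩)
      · exact hor x y h h'
      · subst he1; subst he2; exact hc.2 h
      · exact hc.2 h'
      · exact hne he1.symm
    have h3 : ∀ x y, O x y → O' x y := fun x y h => Or.inl h
    have := hmax O' h1 h2 h3 a b (Or.inr ⟨rfl, rfl⟩)
    exact hc.1 this
  constructor
  · intro htr
    constructor
    · rintro ⟨a, b⟩ ⟨c, d⟩ hab hcd ⟨hG1, hG2, hforce⟩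
      simp only at *
      rcases hforce with ⟨rfl, hne, hnadj⟩ | ⟨rfl, hne, hnadj⟩
      · rcases tot a d hcd with h | h
        · exact h
        · exact absurd (hund d b (hsub d b (htr d a b h hab hne.symm))) hnadj
      · rcases tot c b hcd with h | h
        · exact h
        · exact absurd (hsub a c (htr a b c hab h hne)) hnadj
    · have key : ∀ a b, Relation.TransGen O a b → a = b ∨ O a b := by
        intro a b h
        induction h with
        | single h => exact Or.inr h
        | tail h1 h2 ih =>
          rcases ih with rfl | h
          · exact Or.inr h2
          · rcases eq_or_ne a _ with he | hne
            · exact Or.inl he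
            · exact Or.inr (htr _ _ _ h h2 hne)
      intro a h
      cases h with
      | single h => exact hor a a h h
      | tail h1 h2 =>
        rcases key _ _ h1 with rfl | h
        · exact hor _ _ h2 h2
        · exact hor _ _ h h2
  · rintro ⟨hforce, hacy⟩ a b c hab hbc hac
    have hGab := hsub a b hab
    have hGbc := hsub b c hbc
    by_cases hGac : G a c
    · rcases tot a c hGac with h | h
      · exact h
      · exact absurd (Relation.TransGen.tail
          (Relation.TransGen.tail (Relation.TransGen.single hab) hbc) h) (hacy a)
    · have : O c b := hforce (a, b) (c, b) hab (hund b c hGbc)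
        ⟨hGab, hund b c hGbc, Or.inr ⟨rfl, hac, hGac⟩⟩
      exact absurd this (hor b c hbc)
end

section
/- Let G be an acyclic digraph on a finite vertex set V, and let (a,b) and (c,d) be edges of the complement of tcl(G) that indirectly force each other in the complement of tcl(G), i.e., (a,b) Γ* (c,d) with respect to the complement of tcl(G). Then (a,b) and (c,d) indirectly force each other in the complement of G, i.e., (a,b) Γ* (c,d) with respect to the complement of G. -/
/-! If `(a, b) Γ (a, d)` in the complement of `tcl G`, then `b` and `d` are comparable in `tcl G`,
so they are joined by a path `b = x₀ → x₁ → ⋯ → xₖ = d` of `G`. No `xᵢ` is comparable with `a`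
in `tcl G`, since that would make `b` or `d` comparable with `a`. Consecutive vertices `xᵢ, xᵢ₊₁`
are adjacent in `G`, so `(a, xᵢ) Γ (a, xᵢ₊₁)` in the complement of `G`, and these steps chain
`(a, b)` to `(a, d)`. The case `b = d` is the mirror image. -/

open Relation

section

variable {V : Type*}

instance cmpl.instSymm (E : V → V → Prop) : Std.Symm (cmpl E) :=
  ⟨fun _ _ h => ⟨h.1.symm, fun hu => h.2 hu.symm⟩⟩

theorem cmpl_of_cmpl_tcl {G : V → V → Prop} {a b : V} (h : cmpl (tcl G) a b) : cmpl G a b :=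
  ⟨h.1, fun hu => h.2 (hu.imp TransGen.single TransGen.single)⟩

namespace Forces

variable {E : V → V → Prop} {e f : V × V}

theorem ne (h : Forces E e f) : e ≠ f := by
  rintro rfl
  rcases h.2.2 with h | h <;> exact h.2.1 rfl

theorem swap [Std.Symm E] (h : Forces E e f) : Forces E e.swap f.swap :=
  ⟨Std.Symm.symm _ _ h.1, Std.Symm.symm _ _ h.2.1, h.2.2.symm⟩

instance instSymm [Std.Symm E] : Std.Symm (Forces E) where
  symm _ _ h := ⟨h.2.1, h.1, h.2.2.imp
    (fun ⟨h₁, h₂, h₃⟩ => ⟨h₁.symm, h₂.symm, mt (Std.Symm.symm _ _) h₃⟩)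
    (fun ⟨h₁, h₂, h₃⟩ => ⟨h₁.symm, h₂.symm, mt (Std.Symm.symm _ _) h₃⟩)⟩

end Forces

section Chain

variable {G : V → V → Prop} {a : V}

theorem reflTransGen_forces_cmpl_of_rel {b x : V} (hbx : G b x) (hab : cmpl G a b)
    (hax : cmpl G a x) : ReflTransGen (Forces (cmpl G)) (a, b) (a, x) := by
  obtain rfl | hne := eq_or_ne b x
  · rfl
  · exact .single ⟨hab, hax, .inl ⟨rfl, hne, fun h => h.2 (.inl hbx)⟩⟩

theorem reflTransGen_forces_cmpl_of_tcl {b d : V} (hbd : tcl G b d) (hab : cmpl (tcl G) a b)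
    (had : cmpl (tcl G) a d) : ReflTransGen (Forces (cmpl G)) (a, b) (a, d) := by
  induction hbd using TransGen.head_induction_on with
  | single hbd =>
    exact reflTransGen_forces_cmpl_of_rel hbd (cmpl_of_cmpl_tcl hab) (cmpl_of_cmpl_tcl had)
  | @head b x hbx hxd ih =>
    have hax : cmpl (tcl G) a x := by
      refine ⟨?_, ?_⟩
      · rintro rfl
        exact hab.2 (.inr (.single hbx))
      · rintro (hax | hxa)
        · exact had.2 (.inl (hax.trans hxd))
        · exact hab.2 (.inr (.head hbx hxa))
    exact (reflTransGen_forces_cmpl_of_rel hbx (cmpl_of_cmpl_tcl hab)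
      (cmpl_of_cmpl_tcl hax)).trans (ih hax)

theorem reflTransGen_forces_cmpl_of_ucl_tcl {b d : V} (hbd : ucl (tcl G) b d)
    (hab : cmpl (tcl G) a b) (had : cmpl (tcl G) a d) :
    ReflTransGen (Forces (cmpl G)) (a, b) (a, d) := by
  rcases hbd with hbd | hdb
  · exact reflTransGen_forces_cmpl_of_tcl hbd hab had
  · exact Std.Symm.symm _ _ (reflTransGen_forces_cmpl_of_tcl hdb had hab)

end Chain

theorem reflTransGen_forces_cmpl_of_forces_cmpl_tcl {G : V → V → Prop} {e f : V × V}
    (h : Forces (cmpl (tcl G)) e f) : ReflTransGen (Forces (cmpl G)) e f := by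
  obtain ⟨a, b⟩ := e
  obtain ⟨c, d⟩ := f
  rcases h with ⟨hab, hcd, ⟨rfl, hbd, hbd'⟩ | ⟨rfl, hac, hac'⟩⟩
  · exact reflTransGen_forces_cmpl_of_ucl_tcl (not_not.mp (not_and.mp hbd' hbd)) hab hcd
  · have := reflTransGen_forces_cmpl_of_ucl_tcl (not_not.mp (not_and.mp hac' hac))
      (Std.Symm.symm _ _ hab) (Std.Symm.symm _ _ hcd)
    exact this.lift Prod.swap fun _ _ => Forces.swap

theorem transGen_forces_cmpl_of_forces_cmpl_tcl {G : V → V → Prop} {e f : V × V}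
    (h : Forces (cmpl (tcl G)) e f) : TransGen (Forces (cmpl G)) e f :=
  (reflTransGen_iff_eq_or_transGen.mp (reflTransGen_forces_cmpl_of_forces_cmpl_tcl h)).resolve_left
    h.ne.symm

end

theorem forcing_transfers_to_complement_general
    {V : Type*} (G : V → V → Prop)
    (a b c d : V)
    (h : Relation.TransGen (Forces (cmpl (tcl G))) (a, b) (c, d)) :
    Relation.TransGen (Forces (cmpl G)) (a, b) (c, d) :=
  h.lift' id fun _ _ => transGen_forces_cmpl_of_forces_cmpl_tcl

theorem forcing_transfers_to_complement
    {V : Type*} [Fintype V] (G : V → V → Prop)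
    (hirr : Irreflexive G) (hacyc : Acyclic G)
    (a b c d : V)
    (hab : cmpl (tcl G) a b) (hcd : cmpl (tcl G) c d)
    (h : Relation.TransGen (Forces (cmpl (tcl G))) (a, b) (c, d)) :
    Relation.TransGen (Forces (cmpl G)) (a, b) (c, d) :=
  forcing_transfers_to_complement_general G a b c d h
end

section
/- Let G be an acyclic digraph on a finite vertex set V, let (x,a) and (x,b) be edges of the complement of tcl(G), and let v be a vertex with (a,v) ∈ tcl(G) and (v,b) ∈ tcl(G). Then (x,v) is an edge of the complement of G. -/
theorem intermediate_vertex_in_complement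
    {V : Type*} [Fintype V] (G : V → V → Prop)
    (hirr : Irreflexive G) (hacyc : Acyclic G)
    (x a b v : V)
    (hxa : cmpl (tcl G) x a) (hxb : cmpl (tcl G) x b)
    (hav : tcl G a v) (hvb : tcl G v b) :
    cmpl G x v := by
  obtain ⟨hne_a, hucl_a⟩ := hxa
  obtain ⟨hne_b, hucl_b⟩ := hxb
  refine ⟨?_, ?_⟩
  · rintro rfl
    exact hucl_a (Or.inr hav)
  · rintro (h | h)
    · exact hucl_b (Or.inl ((Relation.TransGen.single h).trans hvb))
    · exact hucl_a (Or.inr (hav.trans (Relation.TransGen.single h)))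
end

section
/- Let G be an acyclic transitive digraph on a finite vertex set V and let S be a subgraph of G such that ucl(S) is a permutation graph. Then tcl(S) is a subgraph of G and ucl(tcl(S)) is a permutation graph. -/
/-!
Since `G` is acyclic and transitive, `tcl G = G`, so `tcl S ⊆ tcl G = G`; and `tcl S`, being
acyclic and transitive, is itself a transitive orientation of `ucl (tcl S)`.

For the complement, take a transitive orientation `F` of the complement of `ucl S` and keep only
its arcs that are non-edges of `ucl (tcl S)`. The only issue is transitivity: given `F a b`,
`F b c` with `b` non-adjacent to `a` and `c` in `ucl (tcl S)`, an `S`-path from `a` to `c` is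
impossible. Indeed `F` never yields a path `x → b → y` across an `S`-edge `x y`, so by totality of
`F` on non-edges, `F x b` propagates along the path; at the last vertex `x` this gives `F x c`
across the `S`-edge `x c`. The case of an `S`-path from `c` to `a` is the same one for the
reversed digraph.
-/

section

variable {V : Type*}

lemma ucl_symm {E : V → V → Prop} {a b : V} (h : ucl E a b) : ucl E b a := h.symm

lemma ucl_swap (E : V → V → Prop) : ucl (Function.swap E) = ucl E :=
  funext₂ fun _ _ => propext or_comm

lemma ucl_tcl_swap (E : V → V → Prop) : ucl (tcl (Function.swap E)) = ucl (tcl E) :=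
  funext₂ fun _ _ => propext <| by
    simp only [ucl, tcl, Relation.transGen_swap, or_comm]

lemma cmpl_ucl_iff {E : V → V → Prop} {a b : V} : cmpl (ucl E) a b ↔ a ≠ b ∧ ¬ ucl E a b := by
  simp only [cmpl, ucl, or_self_iff, or_comm]

lemma cmpl_ucl_tcl_imp {E : V → V → Prop} {a b : V} (h : cmpl (ucl (tcl E)) a b) :
    cmpl (ucl E) a b := by
  rw [cmpl_ucl_iff] at h ⊢
  exact ⟨h.1, fun hE => h.2 (hE.imp .single .single)⟩

lemma Irreflexive.ucl {E : V → V → Prop} (h : Irreflexive E) : Irreflexive (ucl E) :=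
  fun a ha => ha.elim (h a) (h a)

lemma Acyclic.mono {G S : V → V → Prop} (hG : Acyclic G) (hSG : ∀ a b, S a b → G a b) :
    Acyclic S :=
  fun a ha => hG a (Relation.TransGen.mono hSG a a ha)

lemma Acyclic.oriented_tcl {E : V → V → Prop} (h : Acyclic E) : Oriented (tcl E) :=
  fun a _ hab hba => h a (hab.trans hba)

lemma transD_tcl (E : V → V → Prop) : TransD (tcl E) :=
  fun _ _ _ hab hbc _ => hab.trans hbc

lemma TransD.of_tcl {G : V → V → Prop} (hG : TransD G) (hacyc : Acyclic G) {a b : V}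
    (hab : tcl G a b) : G a b := by
  induction hab with
  | single h => exact h
  | @tail c d hac hcd ih =>
    exact hG _ _ _ ih hcd fun had => hacyc a (had ▸ hac.tail hcd)

lemma isOrientation_of_total {O E : V → V → Prop} (hOE : ∀ a b, O a b → E a b)
    (hO : Oriented O) (htot : ∀ a b, E a b → O a b ∨ O b a) : IsOrientation O E := by
  refine ⟨hOE, hO, fun O' hO'E hO' hOO' a b hab => ?_⟩
  exact (htot a b (hO'E a b hab)).resolve_right fun hba => hO' a b hab (hOO' b a hba)

-- Adding the arc `(a, b)` to `O` would keep it oriented, contradicting maximality.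
lemma IsOrientation.total_s11 {O E : V → V → Prop} (hO : IsOrientation O E) {a b : V}
    (hab : E a b) (hne : a ≠ b) : O a b ∨ O b a := by
  by_contra! hnot
  obtain ⟨hOE, hOor, hmax⟩ := hO
  let O' : V → V → Prop := fun u v => O u v ∨ (u = a ∧ v = b)
  have hO'E : ∀ u v, O' u v → E u v := by
    rintro u v (h | ⟨rfl, rfl⟩)
    exacts [hOE u v h, hab]
  have hO'or : Oriented O' := by
    rintro u v (huv | ⟨rfl, rfl⟩) (hvu | ⟨hv, hu⟩)
    · exact hOor u v huv hvu
    · exact hnot.2 (hu ▸ hv ▸ huv)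
    · exact hnot.2 hvu
    · exact hne hu
  exact hnot.1 (hmax O' hO'E hO'or (fun _ _ => Or.inl) a b (Or.inr ⟨rfl, rfl⟩))

lemma isTransOrientation_ucl {E : V → V → Prop} (hor : Oriented E) (htr : TransD E) :
    IsTransOrientation E (ucl E) :=
  ⟨isOrientation_of_total (fun _ _ => Or.inl) hor fun _ _ => id, htr⟩

section Complement

variable {S F : V → V → Prop} (hF : IsTransOrientation F (cmpl (ucl S)))
include hF

lemma IsTransOrientation.not_adj_of_path {x b y : V} (hxb : F x b) (hby : F b y) : ¬ S x y := by
  have hxy : x ≠ y := by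
    rintro rfl
    exact hF.1.2.1 x b hxb hby
  have hF_xy := (cmpl_ucl_iff.mp (hF.1.1 x y (hF.2 x b y hxb hby hxy))).2
  exact fun hS => hF_xy (.inl hS)

lemma IsTransOrientation.forward_of_adj {x y b : V} (hxb : F x b) (hxy : S x y)
    (hyb : cmpl (ucl S) y b) : F y b :=
  (hF.1.total_s11 hyb (cmpl_ucl_iff.mp hyb).1).resolve_right
    fun hby => hF.not_adj_of_path hxb hby hxy

lemma IsTransOrientation.not_tcl_of_path {a b c : V} (hab : F a b) (hbc : F b c)
    (hab' : ¬ ucl (tcl S) a b) (hbc' : ¬ ucl (tcl S) b c) : ¬ tcl S a c := by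
  have hforward : ∀ x, Relation.ReflTransGen S a x → tcl S x c → F x b := by
    intro x hax
    induction hax with
    | refl => exact fun _ => hab
    | @tail y x hay hyx ih =>
      intro hxc
      have hxb : cmpl (ucl S) x b := by
        refine cmpl_ucl_iff.mpr ⟨?_, ?_⟩
        · rintro rfl
          exact hbc' (.inl hxc)
        · rintro (hS | hS)
          · exact hab' (.inl (Relation.TransGen.tail' (hay.tail hyx) hS))
          · exact hbc' (.inl (Relation.TransGen.head hS hxc))
      exact hF.forward_of_adj (ih (Relation.TransGen.head hyx hxc)) hyx hxb
  intro hac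
  obtain ⟨x, hax, hxc⟩ := Relation.TransGen.tail'_iff.mp hac
  exact hF.not_adj_of_path (hforward x hax (.single hxc)) hbc hxc

lemma IsTransOrientation.not_ucl_tcl_of_path {a b c : V} (hab : F a b) (hbc : F b c)
    (hab' : ¬ ucl (tcl S) a b) (hbc' : ¬ ucl (tcl S) b c) : ¬ ucl (tcl S) a c := by
  rintro (hac | hca)
  · exact hF.not_tcl_of_path hab hbc hab' hbc' hac
  · rw [← ucl_swap] at hF
    rw [← ucl_tcl_swap] at hab' hbc'
    exact hF.not_tcl_of_path hab hbc hab' hbc' (Relation.transGen_swap.mpr hca)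

lemma IsTransOrientation.restrict_cmpl_ucl_tcl :
    IsTransOrientation (fun u v => F u v ∧ ¬ ucl (tcl S) u v) (cmpl (ucl (tcl S))) := by
  refine ⟨isOrientation_of_total ?_ ?_ ?_, ?_⟩
  · intro u v ⟨huv, huv'⟩
    exact cmpl_ucl_iff.mpr ⟨(cmpl_ucl_iff.mp (hF.1.1 u v huv)).1, huv'⟩
  · exact fun u v huv hvu => hF.1.2.1 u v huv.1 hvu.1
  · intro u v huv
    have hnot := (cmpl_ucl_iff.mp huv).2
    exact (hF.1.total_s11 (cmpl_ucl_tcl_imp huv) (cmpl_ucl_iff.mp huv).1).imp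
      (⟨·, hnot⟩) (⟨·, fun h => hnot (ucl_symm h)⟩)
  · rintro a b c ⟨hab, hab'⟩ ⟨hbc, hbc'⟩ hac
    exact ⟨hF.2 a b c hab hbc hac, hF.not_ucl_tcl_of_path hab hbc hab' hbc'⟩

end Complement

end

theorem tcl_of_permutation_subgraph_general
    {V : Type*} (G S : V → V → Prop)
    (hacyc : Acyclic G) (htrans : TransD G)
    (hsub : ∀ a b, S a b → G a b)
    (hperm : PermGraph (ucl S)) :
    (∀ a b, tcl S a b → G a b) ∧ PermGraph (ucl (tcl S)) := by
  obtain ⟨-, -, -, F, hF⟩ := hperm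
  have hS : Acyclic S := hacyc.mono hsub
  refine ⟨fun a b hab => htrans.of_tcl hacyc (Relation.TransGen.mono hsub a b hab),
    Irreflexive.ucl hS, fun _ _ => ucl_symm, ?_, ?_⟩
  · exact ⟨tcl S, isTransOrientation_ucl hS.oriented_tcl (transD_tcl S)⟩
  · exact ⟨_, hF.restrict_cmpl_ucl_tcl⟩

theorem tcl_of_permutation_subgraph
    {V : Type*} [Fintype V] (G S : V → V → Prop)
    (hirr : Irreflexive G) (hacyc : Acyclic G) (htrans : TransD G)
    (hsub : ∀ a b, S a b → G a b)
    (hperm : PermGraph (ucl S)) :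
    (∀ a b, tcl S a b → G a b) ∧ PermGraph (ucl (tcl S)) :=
  tcl_of_permutation_subgraph_general G S hacyc htrans hsub hperm
end

section
/- Let G be an undirected transitively orientable graph on a finite vertex set V and let H be any orientation of the complement of G. Then G \ ucl(tcl(H)) is a permutation subgraph of G, i.e., an undirected subgraph of G that is a permutation graph. -/
lemma isOrientation_of_cover {V : Type*} {O E : V → V → Prop}
    (hsub : ∀ a b, O a b → E a b) (hor : Oriented O)
    (hcov : ∀ a b, E a b → O a b ∨ O b a) : IsOrientation O E := by
  refine ⟨hsub, hor, ?_⟩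
  intro O' hsub' hor' hmono a b h
  rcases hcov a b (hsub' a b h) with h1 | h1
  · exact h1
  · exact absurd (hmono _ _ h1) (hor' a b h)

lemma cover_of_isOrientation {V : Type*} {O E : V → V → Prop}
    (h : IsOrientation O E) (hsym : ∀ a b, E a b → E b a)
    (hne : ∀ a b, E a b → a ≠ b) :
    ∀ a b, E a b → O a b ∨ O b a := by
  intro a b hE
  by_contra hc
  push_neg at hc
  obtain ⟨h1, h2⟩ := hc
  have : O a b := by
    refine h.2.2 (fun x y => O x y ∨ (x = a ∧ y = b)) ?_ ?_ (fun x y hx => Or.inl hx)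
      a b (Or.inr ⟨rfl, rfl⟩)
    · rintro x y (h' | ⟨rfl, rfl⟩)
      · exact h.1 x y h'
      · exact hE
    · rintro x y (h' | ⟨hx1, hy1⟩) hyx
      · rcases hyx with h'' | ⟨hy2, hx2⟩
        · exact h.2.1 x y h' h''
        · exact h2 (hx2 ▸ hy2 ▸ h')
      · rcases hyx with h'' | ⟨hy2, hx2⟩
        · exact h2 (hx1 ▸ hy1 ▸ h'')
        · exact hne a b hE (hx1.symm.trans hx2)
  exact h1 this

lemma lemA {V : Type*} (G F H : V → V → Prop)
    (hGsym : ∀ a b, G a b → G b a)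
    (hFsub : ∀ a b, F a b → G a b)
    (hFo : Oriented F) (hFtr : TransD F)
    (hFcov : ∀ a b, G a b → F a b ∨ F b a)
    (hHsub : ∀ a b, H a b → cmpl G a b)
    (hHcov : ∀ a b, cmpl G a b → H a b ∨ H b a)
    {a b c : V} (hab : F a b) (hnT : ¬ Relation.TransGen H a b)
    (hac : Relation.TransGen H a c) :
    F c b ∨ Relation.TransGen H b c := by
  -- one step helper
  have step : ∀ x y : V, H x y → Relation.TransGen H a y →
      (F x b ∨ Relation.TransGen H b x) → (F y b ∨ Relation.TransGen H b y) := by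
    intro x y hxy hTay hPx
    rcases hPx with hxb | hTbx
    · obtain ⟨hxyne, hxyna⟩ := hHsub x y hxy
      by_cases hGby : G b y
      · rcases hFcov b y hGby with hby | hyb
        · exact absurd (hFsub x y (hFtr x b y hxb hby hxyne)) (fun h => hxyna (Or.inl h))
        · exact Or.inl hyb
      · by_cases hyb : y = b
        · subst hyb
          exact absurd (hFsub x y hxb) (fun h => hxyna (Or.inl h))
        · have hcby : cmpl G b y := ⟨fun h => hyb h.symm, fun h => by
            rcases h with h | h
            · exact hGby h
            · exact hGby (hGsym y b h)⟩
          rcases hHcov b y hcby with hby | hyb'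
          · exact Or.inr (Relation.TransGen.single hby)
          · exact absurd (hTay.tail hyb') hnT
    · exact Or.inr (hTbx.tail hxy)
  induction hac with
  | single h => exact step _ _ h (Relation.TransGen.single h) (Or.inl hab)
  | tail hax hxy ih => exact step _ _ hxy (hax.tail hxy) ih
theorem induced_permutation_subgraph
    {V : Type*} [Fintype V] (G H : V → V → Prop)
    (hirr : Irreflexive G) (hund : ∀ a b, G a b → G b a)
    (hto : TransOrientable G)
    (hH : IsOrientation H (cmpl G)) :
    PermSubgraph G (fun a b => G a b ∧ ¬ ucl (tcl H) a b) := by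
  classical
  obtain ⟨F, hFor, hFtr⟩ := hto
  have hFsub : ∀ a b, F a b → G a b := hFor.1
  have hFo : Oriented F := hFor.2.1
  have hGne : ∀ a b : V, G a b → a ≠ b := fun a b h e => hirr a (e ▸ h)
  have hFcov : ∀ a b, G a b → F a b ∨ F b a :=
    cover_of_isOrientation hFor hund hGne
  have hHsub : ∀ a b, H a b → cmpl G a b := hH.1
  have hcmplsym : ∀ a b, cmpl G a b → cmpl G b a := by
    rintro a b ⟨hne, h⟩
    exact ⟨hne.symm, fun h' => h (Or.symm h')⟩
  have hHcov : ∀ a b, cmpl G a b → H a b ∨ H b a :=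
    cover_of_isOrientation hH hcmplsym (fun a b h => h.1)
  have huclsym : ∀ a b : V, ucl (tcl H) a b → ucl (tcl H) b a := fun a b h => Or.symm h
  -- the two key forcing lemmas
  have key : ∀ a b c : V, F a b → F b c → a ≠ c → ¬ ucl (tcl H) a b → ¬ ucl (tcl H) b c →
      ¬ ucl (tcl H) a c := by
    intro a b c hab hbc hac hnab hnbc h
    rcases h with hT | hT
    · rcases lemA G F H hund hFsub hFo hFtr hFcov hHsub hHcov hab
        (fun h' => hnab (Or.inl h')) hT with h' | h'
      · exact hFo b c hbc h'
      · exact hnbc (Or.inl h')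
    · have hFsub' : ∀ x y : V, (fun x y => F y x) x y → G x y :=
        fun x y h' => hund _ _ (hFsub _ _ h')
      have hFo' : Oriented (fun x y => F y x) := fun x y h' h'' => hFo y x h' h''
      have hFtr' : TransD (fun x y => F y x) := by
        intro x y z h1 h2 hne
        exact hFtr z y x h2 h1 (Ne.symm hne)
      have hFcov' : ∀ x y, G x y → F y x ∨ F x y := by
        intro x y h'
        exact (hFcov x y h').symm
      rcases lemA G (fun x y => F y x) H hund hFsub' hFo' hFtr' hFcov' hHsub hHcov
        (a := c) (b := b) (c := a) hbc (fun h' => hnbc (Or.inr h')) hT with h' | h'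
      · exact hFo a b hab h'
      · exact hnab (Or.inr h')
  refine ⟨fun a b h => h.1, ?_, ?_, ?_, ?_⟩
  · -- irreflexive
    intro a h
    exact hirr a h.1
  · -- symmetric
    intro a b h
    exact ⟨hund a b h.1, fun h' => h.2 (Or.symm h')⟩
  · -- TransOrientable S
    refine ⟨fun a b => F a b ∧ ¬ ucl (tcl H) a b, ?_, ?_⟩
    · refine isOrientation_of_cover (fun a b h => ⟨hFsub a b h.1, h.2⟩)
        (fun a b h h' => hFo a b h.1 h'.1) ?_
      intro a b h
      rcases hFcov a b h.1 with h' | h'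
      · exact Or.inl ⟨h', h.2⟩
      · exact Or.inr ⟨h', fun hc => h.2 (Or.symm hc)⟩
    · intro a b c h1 h2 hne
      exact ⟨hFtr a b c h1.1 h2.1 hne, key a b c h1.1 h2.1 hne h1.2 h2.2⟩
  · -- TransOrientable (cmpl S)
    obtain ⟨n, ⟨e⟩⟩ := Finite.exists_equiv_fin V
    set T := tcl H with hTdef
    have hTtrans : ∀ {x y z : V}, T x y → T y z → T x z := fun h1 h2 => Relation.TransGen.trans h1 h2
    have hcS : ∀ a b : V, cmpl (fun a b => G a b ∧ ¬ ucl (tcl H) a b) a b ↔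
        a ≠ b ∧ ucl (tcl H) a b := by
      intro a b
      constructor
      · rintro ⟨hne, h⟩
        refine ⟨hne, ?_⟩
        by_contra hc
        by_cases hG : G a b
        · exact h (Or.inl ⟨hG, hc⟩)
        · have : cmpl G a b := ⟨hne, fun h' => by
            rcases h' with h' | h'
            · exact hG h'
            · exact hG (hund b a h')⟩
          rcases hHcov a b this with h' | h'
          · exact hc (Or.inl (Relation.TransGen.single h'))
          · exact hc (Or.inr (Relation.TransGen.single h'))
      · rintro ⟨hne, h⟩
        refine ⟨hne, ?_⟩
        rintro (h' | h')
        · exact h'.2 h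
        · exact h'.2 (Or.symm h)
    refine ⟨fun a b => (T a b ∧ ¬ T b a) ∨ (T a b ∧ T b a ∧ e a < e b), ?_, ?_⟩
    · have hne : ∀ a b : V, ((T a b ∧ ¬ T b a) ∨ (T a b ∧ T b a ∧ e a < e b)) → a ≠ b := by
        rintro a b (⟨h1, h2⟩ | ⟨h1, h2, h3⟩) rfl
        · exact h2 h1
        · exact lt_irrefl _ h3
      refine isOrientation_of_cover ?_ ?_ ?_
      · intro a b h
        refine (hcS a b).2 ⟨hne a b h, ?_⟩
        rcases h with ⟨h1, _⟩ | ⟨h1, _, _⟩ <;> exact Or.inl h1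
      · rintro a b (⟨h1, h2⟩ | ⟨h1, h2, h3⟩) (⟨h1', h2'⟩ | ⟨h1', h2', h3'⟩)
        · exact h2 h1'
        · exact h2 h1'
        · exact h2' h1
        · exact absurd (h3.trans h3') (lt_irrefl _)
      · intro a b h
        obtain ⟨hab, hT⟩ := (hcS a b).1 h
        have heab : e a ≠ e b := fun h' => hab (e.injective h')
        rcases hT with h1 | h1
        · by_cases h2 : T b a
          · rcases heab.lt_or_gt with h3 | h3
            · exact Or.inl (Or.inr ⟨h1, h2, h3⟩)
            · exact Or.inr (Or.inr ⟨h2, h1, h3⟩)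
          · exact Or.inl (Or.inl ⟨h1, h2⟩)
        · by_cases h2 : T a b
          · rcases heab.lt_or_gt with h3 | h3
            · exact Or.inl (Or.inr ⟨h2, h1, h3⟩)
            · exact Or.inr (Or.inr ⟨h1, h2, h3⟩)
          · exact Or.inr (Or.inl ⟨h1, h2⟩)
    · rintro a b c (⟨h1, h2⟩ | ⟨h1, h2, h3⟩) (⟨h1', h2'⟩ | ⟨h1', h2', h3'⟩) hac
      · exact Or.inl ⟨hTtrans h1 h1', fun hca => h2' (hTtrans hca h1)⟩
      · exact Or.inl ⟨hTtrans h1 h1', fun hca => h2 (hTtrans h1' hca)⟩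
      · exact Or.inl ⟨hTtrans h1 h1', fun hca => h2' (hTtrans hca h1)⟩
      · by_cases hca : T c a
        · exact Or.inr ⟨hTtrans h1 h1', hca, h3.trans h3'⟩
        · exact Or.inl ⟨hTtrans h1 h1', hca⟩
end
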